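/- arXiv:math/0210155 — 4 statements merged into one kernel-verified Lean document; each statement's English description precedes it below -/
import Mathlib

section
/- Let (A,e) be an order unit space and L a seminorm on A with L(a) = 0 iff a ∈ ℝe. Suppose the metric ρ_L(μ,ν) = sup { |μ(a) − ν(a)| : L(a) ≤ 1 } on the state space S(A) satisfies ρ_L ≤ C for some constant C (finite radius), and the set B₁ = { a : L(a) ≤ 1 and ‖a‖ ≤ 1 } is totally bounded in the order-unit norm. Then the topology on S(A) induced by ρ_L coincides with the weak-* topology. -/
/-!
For an order unit `e`, the functional `p a = inf {r | a ≤ r • e}` is sublinear, the order-unit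
norm is `‖a‖ = max (p a) (p (-a))`, and Hahn–Banach gives a state attaining `p` at any point;
hence the norm is computed by the states. If `ρ_L(ν, μ) → 0` then `ν a → μ a`, because
`|ν a - μ a| ≤ L a * ρ_L(ν, μ)`. Conversely, for `L a ≤ 1` the recentred element `a - μ a • e`
still has `L ≤ 1` and, by the finite radius, norm at most `C`. These elements form a totally
bounded set, on which the `1`-Lipschitz states converge uniformly as soon as they converge
pointwise, and this bounds `ρ_L(ν, μ)`.
-/

open Filter Topology

theorem exists_linearMap_le_sublinear_eq {E : Type*} [AddCommGroup E] [Module ℝ E] (N : E → ℝ)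
    (N_hom : ∀ c : ℝ, 0 < c → ∀ x, N (c • x) = c * N x)
    (N_add : ∀ x y, N (x + y) ≤ N x + N y) (x : E) :
    ∃ g : E →ₗ[ℝ] ℝ, (∀ y, g y ≤ N y) ∧ g x = N x := by
  have N_zero : N 0 = 0 := by
    have h := N_hom 2 two_pos 0
    rw [smul_zero] at h
    linarith
  let f := LinearPMap.mkSpanSingleton' (σ := RingHom.id ℝ) x (N x) fun c hc => by
    rcases smul_eq_zero.1 hc with rfl | rfl <;> simp [N_zero]
  have hf : ∀ y : f.domain, f y ≤ N y := by
    rintro ⟨y, hy⟩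
    obtain ⟨c, rfl⟩ := Submodule.mem_span_singleton.1 hy
    simp only [f, LinearPMap.mkSpanSingleton'_apply, RingHom.id_apply, smul_eq_mul]
    rcases lt_trichotomy c 0 with hc | rfl | hc
    · have h := N_hom (-c) (neg_pos.2 hc) (-x)
      rw [neg_smul, smul_neg, neg_neg] at h
      have h₀ := N_add x (-x)
      rw [add_neg_cancel, N_zero] at h₀
      nlinarith
    · simp [N_zero]
    · exact (N_hom c hc x).ge
  obtain ⟨g, hgf, hgN⟩ := exists_extension_of_le_sublinear f N N_hom N_add hf
  exact ⟨g, hgN, (hgf ⟨x, Submodule.mem_span_singleton_self x⟩).trans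
    (LinearPMap.mkSpanSingleton'_apply_self _ _ _ _)⟩

theorem Real.sInf_inter_of_isUpperSet {s t : Set ℝ} (hs : IsUpperSet s) (ht : IsUpperSet t)
    (hs₀ : s.Nonempty) (ht₀ : t.Nonempty) (hsb : BddBelow s) (htb : BddBelow t) :
    sInf (s ∩ t) = max (sInf s) (sInf t) := by
  have Ioi_subset {u : Set ℝ} (hu : IsUpperSet u) (hu₀ : u.Nonempty) {x : ℝ} (hx : sInf u < x) :
      x ∈ u := by
    obtain ⟨y, hy, hyx⟩ := exists_lt_of_csInf_lt hu₀ hx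
    exact hu hyx.le hy
  have hIoi : Set.Ioi (max (sInf s) (sInf t)) ⊆ s ∩ t := fun x hx =>
    ⟨Ioi_subset hs hs₀ ((le_max_left _ _).trans_lt hx),
      Ioi_subset ht ht₀ ((le_max_right _ _).trans_lt hx)⟩
  refine le_antisymm ?_ ?_
  · calc sInf (s ∩ t) ≤ sInf (Set.Ioi (max (sInf s) (sInf t))) :=
          csInf_le_csInf (hsb.mono Set.inter_subset_left) Set.nonempty_Ioi hIoi
      _ = max (sInf s) (sInf t) := csInf_Ioi
  · exact le_csInf (Set.nonempty_Ioi.mono hIoi) fun x hx =>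
      max_le (csInf_le hsb hx.1) (csInf_le htb hx.2)

theorem TotallyBounded.tendstoUniformlyOn_of_lipschitzWith {α ι : Type*} [PseudoMetricSpace α]
    {K : NNReal} {F : Filter ι} {f : ι → α → ℝ} {g : α → ℝ} {s : Set α} (hs : TotallyBounded s)
    (hf : ∀ i, LipschitzWith K (f i)) (hg : LipschitzWith K g)
    (h : ∀ x ∈ s, Tendsto (fun i => f i x) F (𝓝 (g x))) : TendstoUniformlyOn f g F s := by
  rw [Metric.tendstoUniformlyOn_iff]
  intro ε hε
  set δ := ε / (3 * (K + 1))
  have hKδ : K * δ ≤ ε / 3 := by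
    rw [mul_div_assoc', div_le_div_iff₀ (by positivity) (by norm_num)]
    nlinarith [K.coe_nonneg]
  obtain ⟨t, hts, htf, hcover⟩ :=
    Metric.finite_approx_of_totallyBounded hs δ (by positivity)
  have hnet : ∀ᶠ i in F, ∀ y ∈ t, dist (g y) (f i y) < ε / 3 :=
    htf.eventually_all.2 fun y hy => by
      simpa only [dist_comm] using Metric.tendsto_nhds.1 (h y (hts hy)) _ (by positivity)
  filter_upwards [hnet] with i hi x hx
  obtain ⟨y, hy, hxy⟩ := Set.mem_iUnion₂.1 (hcover hx)
  have hxy' : K * dist x y ≤ ε / 3 :=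
    (mul_le_mul_of_nonneg_left (Metric.mem_ball.1 hxy).le K.coe_nonneg).trans hKδ
  calc dist (g x) (f i x) ≤ dist (g x) (g y) + dist (g y) (f i y) + dist (f i y) (f i x) :=
        dist_triangle4 _ _ _ _
    _ < ε := by
        linarith [(hg.dist_le_mul x y).trans hxy', hi y hy,
          (hf i |>.dist_le_mul y x).trans (dist_comm x y ▸ hxy')]

section OrderUnit

variable {A : Type*} [AddCommGroup A] [Module ℝ A] [PartialOrder A]

structure IsOrderUnit (e : A) : Prop where
  nonneg : 0 ≤ e
  ne_zero : e ≠ 0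
  exists_le_smul : ∀ a : A, ∃ r : ℝ, a ≤ r • e

noncomputable def orderGauge (e a : A) : ℝ := sInf {r : ℝ | a ≤ r • e}

namespace IsOrderUnit

variable [IsOrderedAddMonoid A] [PosSMulMono ℝ A] {e : A} (he : IsOrderUnit e)
include he

theorem nonneg_of_smul_nonneg {t : ℝ} (ht : 0 ≤ t • e) : 0 ≤ t := by
  by_contra! htneg
  have : t • e = 0 := le_antisymm (smul_nonpos_of_nonpos_of_nonneg htneg.le he.nonneg) ht
  exact he.ne_zero ((smul_eq_zero.1 this).resolve_left htneg.ne)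

theorem le_smul_of_le {a : A} {r s : ℝ} (ha : a ≤ r • e) (hrs : r ≤ s) : a ≤ s • e :=
  ha.trans (smul_le_smul_of_nonneg_right hrs he.nonneg)

theorem bddBelow_setOf_le_smul (a : A) : BddBelow {r : ℝ | a ≤ r • e} := by
  obtain ⟨s, hs⟩ := he.exists_le_smul (-a)
  refine ⟨-s, fun r hr => ?_⟩
  have : 0 ≤ (r + s) • e := by
    simpa [add_smul] using add_le_add hr hs
  linarith [he.nonneg_of_smul_nonneg this]

theorem orderGauge_le {a : A} {r : ℝ} (ha : a ≤ r • e) : orderGauge e a ≤ r :=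
  csInf_le (he.bddBelow_setOf_le_smul a) ha

theorem le_smul_of_orderGauge_lt {a : A} {r : ℝ} (h : orderGauge e a < r) : a ≤ r • e := by
  obtain ⟨s, hs, hsr⟩ := exists_lt_of_csInf_lt (he.exists_le_smul a) h
  exact he.le_smul_of_le hs hsr.le

theorem orderGauge_add_le (a b : A) : orderGauge e (a + b) ≤ orderGauge e a + orderGauge e b := by
  refine le_of_forall_pos_le_add fun ε hε => ?_
  have ha := he.le_smul_of_orderGauge_lt (show orderGauge e a < orderGauge e a + ε / 2 by linarith)
  have hb := he.le_smul_of_orderGauge_lt (show orderGauge e b < orderGauge e b + ε / 2 by linarith)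
  calc orderGauge e (a + b) ≤ (orderGauge e a + ε / 2) + (orderGauge e b + ε / 2) :=
        he.orderGauge_le (by simpa [add_smul] using add_le_add ha hb)
    _ = orderGauge e a + orderGauge e b + ε := by ring

theorem orderGauge_smul_le {c : ℝ} (hc : 0 < c) (a : A) :
    orderGauge e (c • a) ≤ c * orderGauge e a := by
  refine le_of_forall_pos_le_add fun ε hε => ?_
  have ha := he.le_smul_of_orderGauge_lt (show orderGauge e a < orderGauge e a + ε / c by
    linarith [div_pos hε hc])
  calc orderGauge e (c • a) ≤ c * (orderGauge e a + ε / c) :=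
        he.orderGauge_le (by simpa [smul_smul] using smul_le_smul_of_nonneg_left ha hc.le)
    _ = c * orderGauge e a + ε := by field_simp

theorem orderGauge_smul {c : ℝ} (hc : 0 < c) (a : A) :
    orderGauge e (c • a) = c * orderGauge e a := by
  refine (he.orderGauge_smul_le hc a).antisymm ?_
  have := he.orderGauge_smul_le (inv_pos.2 hc) (c • a)
  rw [smul_smul, inv_mul_cancel₀ hc.ne', one_smul] at this
  calc c * orderGauge e a ≤ c * (c⁻¹ * orderGauge e (c • a)) := by gcongr
    _ = orderGauge e (c • a) := by field_simp

theorem orderGauge_smul_self (t : ℝ) : orderGauge e (t • e) = t :=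
  (he.orderGauge_le le_rfl).antisymm <| le_csInf (he.exists_le_smul _) fun r hr =>
    sub_nonneg.1 <| he.nonneg_of_smul_nonneg <| by rwa [sub_smul, sub_nonneg]

end IsOrderUnit

end OrderUnit

section Normed

variable {A : Type*} [NormedAddCommGroup A] [NormedSpace ℝ A]

def stateSpace (e : A) : Set (WeakDual ℝ A) := {μ | μ e = 1 ∧ ∀ a : A, |μ a| ≤ ‖a‖}

variable [PartialOrder A] [IsOrderedAddMonoid A] [PosSMulMono ℝ A] {e : A}

theorem nonneg_of_norm_eq_sInf (hnorm : ∀ a : A, ‖a‖ = sInf {r : ℝ | -(r • e) ≤ a ∧ a ≤ r • e})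
    (he : e ≠ 0) : 0 ≤ e := by
  set T := {r : ℝ | -(r • e) ≤ e ∧ e ≤ r • e}
  have hpos : 0 < sInf T := hnorm e ▸ norm_pos_iff.2 he
  -- `sInf` of a set of reals that is empty or unbounded below is `0`
  have hT₀ : T.Nonempty := Set.nonempty_iff_ne_empty.2 fun h => by simp [h] at hpos
  have hTb : BddBelow T := by
    by_contra h
    simp [Real.sInf_of_not_bddBelow h] at hpos
  obtain ⟨r, hr⟩ := hT₀
  have hr₀ : 0 < r := hpos.trans_le (csInf_le hTb hr)
  refine nonneg_of_smul_nonneg_of_pos_left (a := r + 1) ?_ (by linarith)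
  simpa [add_smul] using add_le_add_right hr.1 (r • e)

namespace IsOrderUnit

variable (he : IsOrderUnit e) (hnorm : ∀ a : A, ‖a‖ = sInf {r : ℝ | -(r • e) ≤ a ∧ a ≤ r • e})
include he hnorm

theorem norm_eq_max_orderGauge (a : A) : ‖a‖ = max (orderGauge e a) (orderGauge e (-a)) := by
  have hup (b : A) : IsUpperSet {r : ℝ | b ≤ r • e} := fun _ _ hrs hr => he.le_smul_of_le hr hrs
  have hT : {r : ℝ | -(r • e) ≤ a ∧ a ≤ r • e} = {r : ℝ | a ≤ r • e} ∩ {r : ℝ | -a ≤ r • e} :=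
    Set.ext fun r => and_comm.trans (and_congr Iff.rfl neg_le)
  rw [hnorm, hT, Real.sInf_inter_of_isUpperSet (hup a) (hup (-a)) (he.exists_le_smul a)
    (he.exists_le_smul (-a)) (he.bddBelow_setOf_le_smul a) (he.bddBelow_setOf_le_smul (-a))]
  rfl

theorem exists_mem_stateSpace_apply_eq (b : A) :
    ∃ σ ∈ stateSpace e, σ b = orderGauge e b := by
  obtain ⟨g, hg, hgb⟩ := exists_linearMap_le_sublinear_eq (orderGauge e)
    (fun _ hc a => he.orderGauge_smul hc a) he.orderGauge_add_le b
  have hbound (a : A) : |g a| ≤ ‖a‖ := by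
    rw [he.norm_eq_max_orderGauge hnorm a, abs_le]
    constructor
    · linarith [hg (-a), g.map_neg a, le_max_right (orderGauge e a) (orderGauge e (-a))]
    · exact (hg a).trans (le_max_left _ _)
  have hge : g e = 1 := by
    have h₁ := he.orderGauge_smul_self 1
    have h₂ := he.orderGauge_smul_self (-1)
    rw [one_smul] at h₁
    rw [neg_one_smul] at h₂
    linarith [hg e, hg (-e), g.map_neg e]
  exact ⟨g.mkContinuous 1 fun a => by simpa [Real.norm_eq_abs] using hbound a, ⟨hge, hbound⟩, hgb⟩

theorem norm_le_of_forall_mem_stateSpace {b : A} {M : ℝ}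
    (h : ∀ σ ∈ stateSpace e, |σ b| ≤ M) : ‖b‖ ≤ M := by
  obtain ⟨σ₁, hσ₁, hσ₁b⟩ := he.exists_mem_stateSpace_apply_eq hnorm b
  obtain ⟨σ₂, hσ₂, hσ₂b⟩ := he.exists_mem_stateSpace_apply_eq hnorm (-b)
  rw [he.norm_eq_max_orderGauge hnorm, ← hσ₁b, ← hσ₂b, map_neg]
  exact max_le ((le_abs_self _).trans (h σ₁ hσ₁)) ((neg_le_abs _).trans (h σ₂ hσ₂))

end IsOrderUnit

end Normed

section LipDist

variable {A : Type*} [NormedAddCommGroup A] [NormedSpace ℝ A]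

theorem Seminorm.totallyBounded_setOf_le_one_norm_le (L : Seminorm ℝ A)
    (h : TotallyBounded {a : A | L a ≤ 1 ∧ ‖a‖ ≤ 1}) (R : ℝ) :
    TotallyBounded {a : A | L a ≤ 1 ∧ ‖a‖ ≤ R} := by
  set D := max R 1
  have hD : 1 ≤ D := le_max_right R 1
  have hD₀ : 0 < D := by linarith
  refine (h.image (uniformContinuous_const_smul D)).subset ?_
  rintro b ⟨hLb, hb⟩
  refine ⟨D⁻¹ • b, ⟨?_, ?_⟩, smul_inv_smul₀ hD₀.ne' b⟩
  · rw [map_smul_eq_mul, Real.norm_of_nonneg (inv_nonneg.2 hD₀.le)]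
    exact mul_le_one₀ (inv_le_one_of_one_le₀ hD) (apply_nonneg L b) hLb
  · rw [norm_smul, Real.norm_of_nonneg (inv_nonneg.2 hD₀.le), inv_mul_le_one₀ hD₀]
    exact hb.trans (le_max_left R 1)

noncomputable def lipDist (L : Seminorm ℝ A) (μ ν : WeakDual ℝ A) : ℝ :=
  sSup {x : ℝ | ∃ a : A, L a ≤ 1 ∧ x = |μ a - ν a|}

variable {L : Seminorm ℝ A} {μ ν : WeakDual ℝ A}

theorem lipDist_nonneg : 0 ≤ lipDist L μ ν :=
  Real.sSup_nonneg <| by rintro _ ⟨a, -, rfl⟩; exact abs_nonneg _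

theorem lipDist_le {r : ℝ} (hr : 0 ≤ r) (h : ∀ a, L a ≤ 1 → |μ a - ν a| ≤ r) :
    lipDist L μ ν ≤ r :=
  Real.sSup_le (by rintro _ ⟨a, ha, rfl⟩; exact h a ha) hr

theorem abs_sub_le_lipDist {C : ℝ} (hC : ∀ a, L a ≤ 1 → |μ a - ν a| ≤ C) {a : A}
    (ha : L a ≤ 1) : |μ a - ν a| ≤ lipDist L μ ν :=
  le_csSup ⟨C, by rintro _ ⟨b, hb, rfl⟩; exact hC b hb⟩ ⟨a, ha, rfl⟩

variable {e : A}

theorem apply_smul_of_mem_stateSpace (hμ : μ ∈ stateSpace e) (t : ℝ) : μ (t • e) = t := by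
  rw [map_smul, hμ.1, smul_eq_mul, mul_one]

theorem lipschitzWith_one_of_mem_stateSpace (hμ : μ ∈ stateSpace e) : LipschitzWith 1 μ :=
  LipschitzWith.of_dist_le_mul fun a b => by
    simpa [Real.dist_eq, dist_eq_norm, ← map_sub] using hμ.2 (a - b)

theorem abs_sub_le_mul_lipDist (hμ : μ ∈ stateSpace e) (hν : ν ∈ stateSpace e)
    (hker : ∀ a, L a = 0 → ∃ t : ℝ, a = t • e) {C : ℝ} (hC : ∀ a, L a ≤ 1 → |μ a - ν a| ≤ C)
    (a : A) : |μ a - ν a| ≤ L a * lipDist L μ ν := by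
  rcases (apply_nonneg L a).eq_or_lt with hLa | hLa
  · obtain ⟨t, rfl⟩ := hker a hLa.symm
    rw [apply_smul_of_mem_stateSpace hμ, apply_smul_of_mem_stateSpace hν, sub_self, abs_zero]
    exact mul_nonneg (apply_nonneg L _) lipDist_nonneg
  · have hLa' : L ((L a)⁻¹ • a) ≤ 1 := by
      rw [map_smul_eq_mul, norm_inv, Real.norm_of_nonneg hLa.le, inv_mul_cancel₀ hLa.ne']
    have h := abs_sub_le_lipDist hC hLa'
    rw [map_smul, map_smul, smul_eq_mul, smul_eq_mul, ← mul_sub, abs_mul,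
      abs_of_pos (inv_pos.2 hLa), inv_mul_le_iff₀ hLa] at h
    exact h

end LipDist

section Criterion

variable {A : Type*} [NormedAddCommGroup A] [NormedSpace ℝ A] {e : A} {L : Seminorm ℝ A} {C : ℝ}
  {ι : Type*} {F : Filter ι} {ν : ι → WeakDual ℝ A} {μ : WeakDual ℝ A}

theorem tendsto_apply_of_tendsto_lipDist (hν : ∀ i, ν i ∈ stateSpace e) (hμ : μ ∈ stateSpace e)
    (hker : ∀ a, L a = 0 → ∃ t : ℝ, a = t • e)
    (hrad : ∀ σ ∈ stateSpace e, ∀ a, L a ≤ 1 → |σ a - μ a| ≤ C)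
    (h : Tendsto (fun i => lipDist L (ν i) μ) F (𝓝 0)) (a : A) :
    Tendsto (fun i => ν i a) F (𝓝 (μ a)) := by
  rw [tendsto_iff_norm_sub_tendsto_zero]
  refine squeeze_zero (fun _ => norm_nonneg _)
    (fun i => abs_sub_le_mul_lipDist (hν i) hμ hker (hrad (ν i) (hν i)) a) ?_
  simpa using h.const_mul (L a)

theorem tendsto_lipDist_of_tendsto_apply [PartialOrder A] [IsOrderedAddMonoid A]
    [PosSMulMono ℝ A] (he : IsOrderUnit e)
    (hnorm : ∀ a : A, ‖a‖ = sInf {r : ℝ | -(r • e) ≤ a ∧ a ≤ r • e})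
    (hν : ∀ i, ν i ∈ stateSpace e) (hμ : μ ∈ stateSpace e) (hLe : L e = 0)
    (hrad : ∀ σ ∈ stateSpace e, ∀ a, L a ≤ 1 → |σ a - μ a| ≤ C)
    (hTB : TotallyBounded {a : A | L a ≤ 1 ∧ ‖a‖ ≤ 1})
    (h : ∀ a, Tendsto (fun i => ν i a) F (𝓝 (μ a))) :
    Tendsto (fun i => lipDist L (ν i) μ) F (𝓝 0) := by
  have hunif : TendstoUniformlyOn (fun i => ⇑(ν i)) μ F {b | L b ≤ 1 ∧ ‖b‖ ≤ C} :=
    (L.totallyBounded_setOf_le_one_norm_le hTB C).tendstoUniformlyOn_of_lipschitzWith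
      (fun i => lipschitzWith_one_of_mem_stateSpace (hν i)) (lipschitzWith_one_of_mem_stateSpace hμ)
      fun b _ => h b
  rw [Metric.tendstoUniformlyOn_iff] at hunif
  refine Metric.tendsto_nhds.2 fun ε hε => ?_
  filter_upwards [hunif (ε / 2) (half_pos hε)] with i hi
  rw [Real.dist_0_eq_abs, abs_of_nonneg lipDist_nonneg]
  refine (lipDist_le (half_pos hε).le fun a ha => ?_).trans_lt (half_lt_self hε)
  have hb : a - μ a • e ∈ {b | L b ≤ 1 ∧ ‖b‖ ≤ C} := by
    refine ⟨?_, he.norm_le_of_forall_mem_stateSpace hnorm fun σ hσ => ?_⟩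
    · calc L (a - μ a • e) ≤ L a + L (μ a • e) := map_sub_le_add L _ _
        _ = L a := by rw [map_smul_eq_mul, hLe, mul_zero, add_zero]
        _ ≤ 1 := ha
    · rw [map_sub, apply_smul_of_mem_stateSpace hσ]
      exact hrad σ hσ a ha
  have := (hi _ hb).le
  rwa [Real.dist_eq, map_sub, map_sub, apply_smul_of_mem_stateSpace hμ,
    apply_smul_of_mem_stateSpace (hν i), sub_self, zero_sub, abs_neg] at this

end Criterion

theorem rieffel_criterion_general
    {A : Type*} [NormedAddCommGroup A] [NormedSpace ℝ A] [PartialOrder A]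
    (hadd : ∀ a b c : A, a ≤ b → a + c ≤ b + c)
    (hsmul : ∀ (r : ℝ) (a : A), 0 ≤ r → 0 ≤ a → 0 ≤ r • a)
    (e : A)
    (horder : ∀ a : A, ∃ r : ℝ, a ≤ r • e)
    (hnorm : ∀ a : A, ‖a‖ = sInf {r : ℝ | -(r • e) ≤ a ∧ a ≤ r • e})
    -- L is a seminorm vanishing exactly on ℝe
    (L : A → ℝ)
    (hL0 : ∀ a : A, L a = 0 ↔ ∃ t : ℝ, a = t • e)
    (hLhom : ∀ (t : ℝ) (a : A), L (t • a) = |t| * L a)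
    (hLtri : ∀ a b : A, L (a + b) ≤ L a + L b)
    -- the state space, inside the weak-* dual
    (S : Set (WeakDual ℝ A))
    (hS : S = {μ : WeakDual ℝ A | μ e = 1 ∧ ∀ a : A, |μ a| ≤ ‖a‖})
    -- the metric ρ_L
    (ρ : S → S → ℝ)
    (hρ : ∀ μ ν : S, ρ μ ν = sSup {x : ℝ | ∃ a : A, L a ≤ 1 ∧ x = |(μ : WeakDual ℝ A) a - (ν : WeakDual ℝ A) a|})
    -- (i) finite radius
    (C : ℝ)
    (hrad : ∀ μ ν : S, ∀ a : A, L a ≤ 1 → |(μ : WeakDual ℝ A) a - (ν : WeakDual ℝ A) a| ≤ C)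
    -- (ii) the unit Lip/norm ball is totally bounded
    (hTB : TotallyBounded {a : A | L a ≤ 1 ∧ ‖a‖ ≤ 1}) :
    -- conclusion: the ρ_L-topology coincides with the (subspace) weak-* topology on S
    ∀ (F : Filter S) (μ : S),
      Filter.Tendsto id F (nhds μ) ↔ Filter.Tendsto (fun ν => ρ ν μ) F (nhds 0) := by
  intro F μ
  obtain rfl : S = stateSpace e := hS
  have : IsOrderedAddMonoid A := { add_le_add_left := fun a b h c => hadd a b c h }
  have : PosSMulMono ℝ A := .of_smul_nonneg fun r hr a ha => hsmul r a hr ha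
  let L' : Seminorm ℝ A := .of L hLtri fun t a => by rw [hLhom, Real.norm_eq_abs]
  have he₀ : e ≠ 0 := fun h => by simpa [h] using μ.2.1
  have he : IsOrderUnit e := ⟨nonneg_of_norm_eq_sInf hnorm he₀, he₀, horder⟩
  have hrad' : ∀ σ ∈ stateSpace e, ∀ a, L' a ≤ 1 → |σ a - μ.1 a| ≤ C :=
    fun σ hσ => hrad ⟨σ, hσ⟩ μ
  simp only [show ∀ ν, ρ ν μ = lipDist L' ν μ from fun ν => hρ ν μ]
  rw [tendsto_subtype_rng, tendsto_iff_forall_eval_tendsto_topDualPairing]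
  exact ⟨fun h => tendsto_lipDist_of_tendsto_apply he hnorm (fun ν => ν.2) μ.2
      ((hL0 e).2 ⟨1, (one_smul ℝ e).symm⟩) hrad' hTB h,
    fun h => tendsto_apply_of_tendsto_lipDist (fun ν => ν.2) μ.2 (fun a => (hL0 a).1) hrad' h⟩

theorem rieffel_criterion
    {A : Type*} [NormedAddCommGroup A] [NormedSpace ℝ A] [PartialOrder A]
    (hadd : ∀ a b c : A, a ≤ b → a + c ≤ b + c)
    (hsmul : ∀ (r : ℝ) (a : A), 0 ≤ r → 0 ≤ a → 0 ≤ r • a)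
    (e : A)
    (horder : ∀ a : A, ∃ r : ℝ, a ≤ r • e)
    (harch : ∀ a : A, (∀ r : ℝ, 0 ≤ r → a ≤ r • e) → a ≤ 0)
    (hnorm : ∀ a : A, ‖a‖ = sInf {r : ℝ | -(r • e) ≤ a ∧ a ≤ r • e})
    -- L is a seminorm vanishing exactly on ℝe
    (L : A → ℝ)
    (hL0 : ∀ a : A, L a = 0 ↔ ∃ t : ℝ, a = t • e)
    (hLhom : ∀ (t : ℝ) (a : A), L (t • a) = |t| * L a)
    (hLtri : ∀ a b : A, L (a + b) ≤ L a + L b)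
    -- the state space, inside the weak-* dual
    (S : Set (WeakDual ℝ A))
    (hS : S = {μ : WeakDual ℝ A | μ e = 1 ∧ ∀ a : A, |μ a| ≤ ‖a‖})
    -- the metric ρ_L
    (ρ : S → S → ℝ)
    (hρ : ∀ μ ν : S, ρ μ ν = sSup {x : ℝ | ∃ a : A, L a ≤ 1 ∧ x = |(μ : WeakDual ℝ A) a - (ν : WeakDual ℝ A) a|})
    -- (i) finite radius
    (C : ℝ)
    (hrad : ∀ μ ν : S, ∀ a : A, L a ≤ 1 → |(μ : WeakDual ℝ A) a - (ν : WeakDual ℝ A) a| ≤ C)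
    -- (ii) the unit Lip/norm ball is totally bounded
    (hTB : TotallyBounded {a : A | L a ≤ 1 ∧ ‖a‖ ≤ 1}) :
    -- conclusion: the ρ_L-topology coincides with the (subspace) weak-* topology on S
    ∀ (F : Filter S) (μ : S),
      Filter.Tendsto id F (nhds μ) ↔ Filter.Tendsto (fun ν => ρ ν μ) F (nhds 0) :=
  rieffel_criterion_general hadd hsmul e horder hnorm L hL0 hLhom hLtri S hS ρ hρ C hrad hTB
end

section
/- With notation as above, for k > 2 the set B₁ = { a ∈ A_ν : L_k(a) ≤ 1, ‖a‖ ≤ 1 } is totally bounded in the operator norm, where L_k((a_{ij})) = sup_{i,j≥1} (i+j)^k (L(a_{ij}) + |ν(a_{ij})|) and L_k(I) = 0. -/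
/-!
By the diameter estimate, an entry of an element of the ball has norm at most
`(1 + d) (L + |ν|) ≤ (1 + d) (i + j + 2) ^ (-k) ≤ (1 + d) ((i + 1) (j + 1)) ^ (-3/2)` once `k ≥ 3`,
a majorant `c` summable over `ℕ × ℕ`. An operator whose matrix is dominated by `c` has norm at most
`∑ c`; so cutting the matrix down to a finite set of entries costs less than `ε` uniformly, and
the scalar part `t` is bounded by `1 + ∑ c`. The truncated matrices range over a finite sum of
images of the totally bounded set `(1 + d) • {L ≤ 1, ‖·‖ ≤ 1}`, hence so does the whole ball
up to `ε`, plus a compact segment of scalars.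
-/

open scoped InnerProductSpace

open Set Pointwise

section TotallyBounded

variable {E : Type*} [SeminormedAddCommGroup E]

theorem TotallyBounded.add {s t : Set E} (hs : TotallyBounded s) (ht : TotallyBounded t) :
    TotallyBounded (s + t) := by
  rw [Metric.totallyBounded_iff] at hs ht ⊢
  intro ε hε
  obtain ⟨A, hA, hsA⟩ := hs (ε / 2) (half_pos hε)
  obtain ⟨B, hB, htB⟩ := ht (ε / 2) (half_pos hε)
  refine ⟨A + B, hA.add hB, ?_⟩
  rintro _ ⟨x, hx, y, hy, rfl⟩
  obtain ⟨a, ha, hxa⟩ := mem_iUnion₂.1 (hsA hx)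
  obtain ⟨b, hb, hyb⟩ := mem_iUnion₂.1 (htB hy)
  refine mem_iUnion₂.2 ⟨a + b, add_mem_add ha hb, ?_⟩
  calc dist (x + y) (a + b) ≤ dist x a + dist y b := dist_add_add_le x y a b
    _ < ε / 2 + ε / 2 := add_lt_add hxa hyb
    _ = ε := add_halves ε

theorem TotallyBounded.finsetSum {ι : Type*} (u : Finset ι) {f : ι → Set E}
    (hf : ∀ i ∈ u, TotallyBounded (f i)) : TotallyBounded (∑ i ∈ u, f i) := by
  classical
  induction u using Finset.induction with
  | empty =>
    rw [Finset.sum_empty, ← Set.singleton_zero]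
    exact totallyBounded_singleton 0
  | insert a u ha ih =>
    rw [Finset.sum_insert ha]
    exact (hf a (u.mem_insert_self a)).add (ih fun i hi => hf i (Finset.mem_insert_of_mem hi))

end TotallyBounded

theorem Metric.totallyBounded_of_forall_exists_dist_le {X : Type*} [PseudoMetricSpace X]
    {s : Set X} (h : ∀ ε > 0, ∃ t, TotallyBounded t ∧ ∀ x ∈ s, ∃ y ∈ t, dist x y ≤ ε) :
    TotallyBounded s := by
  rw [Metric.totallyBounded_iff]
  intro ε hε
  obtain ⟨t, ht, hst⟩ := h (ε / 2) (half_pos hε)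
  obtain ⟨F, hF, htF⟩ := Metric.totallyBounded_iff.1 ht (ε / 2) (half_pos hε)
  refine ⟨F, hF, fun x hx => ?_⟩
  obtain ⟨y, hy, hxy⟩ := hst x hx
  obtain ⟨z, hz, hyz⟩ := mem_iUnion₂.1 (htF hy)
  refine mem_iUnion₂.2 ⟨z, hz, ?_⟩
  calc dist x z ≤ dist x y + dist y z := dist_triangle x y z
    _ < ε / 2 + ε / 2 := add_lt_add_of_le_of_lt hxy hyz
    _ = ε := add_halves ε

section lp

variable {𝕜 ι : Type*} [NontriviallyNormedField 𝕜] {E : ι → Type*} [∀ i, NormedAddCommGroup (E i)]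
  [∀ i, NormedSpace 𝕜 (E i)] {p : ENNReal} [Fact (1 ≤ p)]

theorem lp.norm_le_tsum_norm (hp : p ≠ ⊤) (f : lp E p) (hf : Summable fun i => ‖f i‖) :
    ‖f‖ ≤ ∑' i, ‖f i‖ := by
  classical
  have hsingle : Summable fun i => ‖lp.single p i (f i)‖ := by
    simpa [lp.norm_single (zero_lt_one.trans_le Fact.out)] using hf
  calc ‖f‖ = ‖∑' i, lp.single p i (f i)‖ := by rw [(lp.hasSum_single hp f).tsum_eq]
    _ ≤ ∑' i, ‖lp.single p i (f i)‖ := norm_tsum_le_tsum_norm hsingle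
    _ = ∑' i, ‖f i‖ := by simp [lp.norm_single (zero_lt_one.trans_le Fact.out)]

theorem ContinuousLinearMap.opNorm_le_tsum_of_norm_apply_single_le [DecidableEq ι] {F : Type*}
    [NormedAddCommGroup F] [NormedSpace 𝕜 F] (hp : p ≠ ⊤) (D : lp E p →L[𝕜] F) {b : ι → ℝ}
    (hb0 : ∀ j, 0 ≤ b j) (hb : Summable b) (hD : ∀ j v, ‖D (lp.single p j v)‖ ≤ b j * ‖v‖) :
    ‖D‖ ≤ ∑' j, b j := by
  refine D.opNorm_le_bound (tsum_nonneg hb0) fun f => ?_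
  have hcol : ∀ j, ‖D (lp.single p j (f j))‖ ≤ b j * ‖f‖ := fun j =>
    (hD j (f j)).trans <| mul_le_mul_of_nonneg_left
      (lp.norm_apply_le_norm (zero_lt_one.trans_le Fact.out).ne' f j) (hb0 j)
  have hsum : Summable fun j => ‖D (lp.single p j (f j))‖ :=
    (hb.mul_right ‖f‖).of_nonneg_of_le (fun _ => norm_nonneg _) hcol
  calc ‖D f‖ = ‖∑' j, D (lp.single p j (f j))‖ := by
        rw [((lp.hasSum_single hp f).mapL D).tsum_eq]
    _ ≤ ∑' j, ‖D (lp.single p j (f j))‖ := norm_tsum_le_tsum_norm hsum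
    _ ≤ ∑' j, b j * ‖f‖ := hsum.tsum_le_tsum hcol (hb.mul_right ‖f‖)
    _ = (∑' j, b j) * ‖f‖ := tsum_mul_right

end lp

section Matrix

variable {𝕜 ι κ E F : Type*} [NontriviallyNormedField 𝕜] [NormedAddCommGroup E] [NormedSpace 𝕜 E]
  [NormedAddCommGroup F] [NormedSpace 𝕜 F] {p : ENNReal} [Fact (1 ≤ p)]

variable (p) in
/-- The elementary operator `e_{ij} ⊗ a` on `ℓ^p`. -/
noncomputable def lp.matrixUnit [DecidableEq κ] (i : κ) (j : ι) (a : E →L[𝕜] F) :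
    lp (fun _ : ι => E) p →L[𝕜] lp (fun _ : κ => F) p :=
  (lp.singleContinuousLinearMap 𝕜 (fun _ => F) p i).comp (a.comp (lp.evalCLM 𝕜 (fun _ => E) p j))

theorem lp.matrixUnit_apply [DecidableEq κ] (i : κ) (j : ι) (a : E →L[𝕜] F)
    (f : lp (fun _ : ι => E) p) : lp.matrixUnit p i j a f = lp.single p i (a (f j) : F) := rfl

theorem lp.lipschitzWith_one_matrixUnit [DecidableEq κ] (i : κ) (j : ι) :
    LipschitzWith 1 (lp.matrixUnit (𝕜 := 𝕜) (E := E) (F := F) p i j) := by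
  refine LipschitzWith.of_dist_le_mul fun a b => ?_
  rw [NNReal.coe_one, one_mul, dist_eq_norm, dist_eq_norm]
  refine ContinuousLinearMap.opNorm_le_bound _ (norm_nonneg _) fun f => ?_
  rw [sub_apply, lp.matrixUnit_apply, lp.matrixUnit_apply, ← lp.single_sub,
    lp.norm_single (zero_lt_one.trans_le Fact.out), ← sub_apply]
  exact (a - b).le_opNorm_of_le (lp.norm_apply_le_norm (zero_lt_one.trans_le Fact.out).ne' f j)

variable [DecidableEq ι]

theorem ContinuousLinearMap.opNorm_le_tsum_of_matrix (hp : p ≠ ⊤)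
    {D : lp (fun _ : ι => E) p →L[𝕜] lp (fun _ : κ => F) p} {a : κ → ι → E →L[𝕜] F}
    (hD : ∀ i j v, D (lp.single p j v) i = a i j v) {c : κ × ι → ℝ} (hc : Summable c)
    (hac : ∀ i j, ‖a i j‖ ≤ c (i, j)) : ‖D‖ ≤ ∑' x, c x := by
  have hc0 : 0 ≤ c := fun x => (norm_nonneg _).trans (hac x.1 x.2)
  have hswap : Summable (c ∘ Prod.swap) := (Equiv.prodComm ι κ).summable_iff.2 hc
  have hcol := (summable_prod_of_nonneg (f := c ∘ Prod.swap) fun x => hc0 _).1 hswap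
  rw [← (Equiv.prodComm ι κ).tsum_eq c]
  change _ ≤ ∑' x, (c ∘ Prod.swap) x
  rw [hswap.tsum_prod' hcol.1]
  refine D.opNorm_le_tsum_of_norm_apply_single_le hp (fun j => tsum_nonneg fun i => hc0 _)
    hcol.2 fun j v => ?_
  have hentry : ∀ i, ‖D (lp.single p j v) i‖ ≤ c (i, j) * ‖v‖ := fun i =>
    hD i j v ▸ (a i j).le_of_opNorm_le (hac i j) v
  have hsum : Summable fun i => ‖D (lp.single p j v) i‖ :=
    ((hcol.1 j).mul_right ‖v‖).of_nonneg_of_le (fun _ => norm_nonneg _) hentry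
  calc ‖D (lp.single p j v)‖ ≤ ∑' i, ‖D (lp.single p j v) i‖ := lp.norm_le_tsum_norm hp _ hsum
    _ ≤ ∑' i, c (i, j) * ‖v‖ := hsum.tsum_le_tsum hentry ((hcol.1 j).mul_right ‖v‖)
    _ = (∑' i, c (i, j)) * ‖v‖ := tsum_mul_right

variable [DecidableEq κ]

theorem lp.matrixUnit_apply_single_apply (x : κ × ι) (a : E →L[𝕜] F) (i : κ) (j : ι) (v : E) :
    lp.matrixUnit p x.1 x.2 a (lp.single p j v) i = if x = (i, j) then a v else 0 := by
  obtain ⟨i', j'⟩ := x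
  by_cases hj : j' = j
  · subst hj
    by_cases hi : i' = i
    · subst hi
      simp [lp.matrixUnit_apply]
    · simp [lp.matrixUnit_apply, hi, Ne.symm hi]
  · simp [lp.matrixUnit_apply, hj]

theorem lp.sub_sum_matrixUnit_apply_single_apply
    {D : lp (fun _ : ι => E) p →L[𝕜] lp (fun _ : κ => F) p} {a : κ → ι → E →L[𝕜] F}
    (hD : ∀ i j v, D (lp.single p j v) i = a i j v) (s : Finset (κ × ι)) (i : κ) (j : ι) (v : E) :
    (D - ∑ x ∈ s, lp.matrixUnit p x.1 x.2 (a x.1 x.2)) (lp.single p j v) i =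
      (↑s : Set (κ × ι))ᶜ.indicator (fun x => a x.1 x.2) (i, j) v := by
  rw [sub_apply, lp.coeFn_sub, Pi.sub_apply, sum_apply, lp.coeFn_sum, Finset.sum_apply]
  simp only [lp.matrixUnit_apply_single_apply, Finset.sum_ite_eq', hD, Set.indicator_apply,
    Set.mem_compl_iff, Finset.mem_coe]
  split_ifs <;> simp

theorem ContinuousLinearMap.norm_sub_sum_matrixUnit_le (hp : p ≠ ⊤)
    {D : lp (fun _ : ι => E) p →L[𝕜] lp (fun _ : κ => F) p} {a : κ → ι → E →L[𝕜] F}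
    (hD : ∀ i j v, D (lp.single p j v) i = a i j v) {c : κ × ι → ℝ} (hc : Summable c)
    (hac : ∀ i j, ‖a i j‖ ≤ c (i, j)) (s : Finset (κ × ι)) :
    ‖D - ∑ x ∈ s, lp.matrixUnit p x.1 x.2 (a x.1 x.2)‖ ≤ ∑' x : {x // x ∉ s}, c x := by
  refine (ContinuousLinearMap.opNorm_le_tsum_of_matrix hp
    (lp.sub_sum_matrixUnit_apply_single_apply hD s) (hc.indicator _) fun i j => ?_).trans_eq
      (tsum_subtype (↑s : Set (κ × ι))ᶜ c).symm
  rw [norm_indicator_eq_indicator_norm]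
  exact Set.indicator_le_indicator (hac i j)

theorem lp.totallyBounded_setOf_matrix (hp : p ≠ ⊤) {K : Set (E →L[𝕜] F)} (hK : TotallyBounded K)
    {c : κ × ι → ℝ} (hc : Summable c) :
    TotallyBounded {D : lp (fun _ : ι => E) p →L[𝕜] lp (fun _ : κ => F) p |
      ∃ a : κ → ι → E →L[𝕜] F, (∀ i j v, D (lp.single p j v) i = a i j v) ∧
        (∀ i j, a i j ∈ K) ∧ ∀ i j, ‖a i j‖ ≤ c (i, j)} := by
  refine Metric.totallyBounded_of_forall_exists_dist_le fun ε hε => ?_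
  obtain ⟨s, hs⟩ := ((tendsto_tsum_compl_atTop_zero c).eventually (gt_mem_nhds hε)).exists
  refine ⟨∑ x ∈ s, lp.matrixUnit p x.1 x.2 '' K, TotallyBounded.finsetSum s fun x _ =>
    hK.image (lp.lipschitzWith_one_matrixUnit x.1 x.2).uniformContinuous, ?_⟩
  rintro D ⟨a, hD, haK, hac⟩
  refine ⟨∑ x ∈ s, lp.matrixUnit p x.1 x.2 (a x.1 x.2),
    finsetSum_mem_finsetSum _ _ _ fun x _ => mem_image_of_mem _ (haK x.1 x.2), ?_⟩
  rw [dist_eq_norm]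
  exact (ContinuousLinearMap.norm_sub_sum_matrixUnit_le hp hD hc hac s).trans hs.le

end Matrix

section RealSmulOne

variable {E : Type*} [NormedAddCommGroup E] [NormedSpace ℂ E]

theorem ContinuousLinearMap.continuous_real_smul_one :
    Continuous fun t : ℝ => t • (1 : E →L[ℂ] E) := by
  simp_rw [RCLike.real_smul_eq_coe_smul (K := ℂ)]
  exact Complex.continuous_ofReal.smul continuous_const

theorem ContinuousLinearMap.abs_le_norm_add_norm_sub_real_smul_one [Nontrivial E] (t : ℝ)
    (G : E →L[ℂ] E) : |t| ≤ ‖G‖ + ‖G - t • 1‖ :=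
  calc |t| = ‖G - (G - t • 1)‖ := by
        rw [sub_sub_cancel, RCLike.real_smul_eq_coe_smul (K := ℂ), norm_smul, norm_one, mul_one,
          RCLike.norm_ofReal]
    _ ≤ ‖G‖ + ‖G - t • 1‖ := norm_sub_le _ _

end RealSmulOne

theorem Real.summable_add_one_rpow_neg_mul_add_one_rpow_neg {s : ℝ} (hs : 1 < s) :
    Summable fun x : ℕ × ℕ => ((x.1 : ℝ) + 1) ^ (-s) * ((x.2 : ℝ) + 1) ^ (-s) := by
  have h : Summable fun n : ℕ => ((n : ℝ) + 1) ^ (-s) := by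
    simpa using (summable_nat_add_iff 1).2 (Real.summable_nat_rpow.2 (neg_lt_neg hs))
  exact h.mul_of_nonneg h (fun n => by positivity) fun n => by positivity

/-- Since `a b ≤ (a + b) ^ 2`, a weight `(a + b) ^ k` with `k ≥ 3` dominates the product
weight `(a b) ^ (3 / 2)`, which is summable over `ℕ × ℕ`. -/
theorem le_rpow_neg_mul_rpow_neg_of_add_pow_mul_le_one {a b q : ℝ} {k : ℕ} (ha : 1 ≤ a)
    (hb : 1 ≤ b) (hk : 3 ≤ k) (h : (a + b) ^ k * q ≤ 1) :
    q ≤ a ^ (-(3 / 2) : ℝ) * b ^ (-(3 / 2) : ℝ) := by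
  have hab : (a * b) ^ (3 / 2 : ℝ) ≤ (a + b) ^ k :=
    calc (a * b) ^ (3 / 2 : ℝ) ≤ ((a + b) ^ 2) ^ (3 / 2 : ℝ) :=
          Real.rpow_le_rpow (by positivity) (by nlinarith) (by norm_num)
      _ = (a + b) ^ 3 := by
          rw [← Real.rpow_natCast, ← Real.rpow_mul (by positivity)]
          norm_num
      _ ≤ (a + b) ^ k := pow_le_pow_right₀ (by linarith) hk
  calc q ≤ ((a + b) ^ k)⁻¹ := by rwa [← one_div, le_div_iff₀ (by positivity), mul_comm]
    _ ≤ ((a * b) ^ (3 / 2 : ℝ))⁻¹ := inv_anti₀ (by positivity) hab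
    _ = a ^ (-(3 / 2) : ℝ) * b ^ (-(3 / 2) : ℝ) := by
        rw [Real.mul_rpow (by positivity) (by positivity), mul_inv,
          Real.rpow_neg (by positivity), Real.rpow_neg (by positivity)]

theorem mem_smul_setOf_le_one {V : Type*} [NormedAddCommGroup V] [NormedSpace ℝ V]
    {S : Submodule ℝ V} {L : V → ℝ} (hL : ∀ (t : ℝ) (x : V), L (t • x) = |t| * L x) {r : ℝ}
    (hr : 1 ≤ r) {x : V} (hxS : x ∈ S) (hLx : L x ≤ 1) (hx : ‖x‖ ≤ r) :
    x ∈ r • {y | y ∈ S ∧ L y ≤ 1 ∧ ‖y‖ ≤ 1} := by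
  have hr0 : 0 < r := zero_lt_one.trans_le hr
  refine ⟨r⁻¹ • x, ⟨S.smul_mem _ hxS, ?_, ?_⟩, smul_inv_smul₀ hr0.ne' x⟩
  · rw [hL, abs_of_pos (inv_pos.2 hr0)]
    calc r⁻¹ * L x ≤ r⁻¹ * 1 := mul_le_mul_of_nonneg_left hLx (inv_nonneg.2 hr0.le)
      _ ≤ 1 := by rw [mul_one]; exact inv_le_one_of_one_le₀ hr
  · rw [norm_smul, Real.norm_of_nonneg (inv_nonneg.2 hr0.le), inv_mul_le_one₀ hr0]
    exact hx

theorem ball_of_Ak_totallyBounded_general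
    {H : Type*} [NormedAddCommGroup H] [InnerProductSpace ℂ H] [CompleteSpace H]
    (LipA : Submodule ℝ (H →L[ℂ] H))
    (L : (H →L[ℂ] H) → ℝ)
    (hLhom : ∀ (t : ℝ) (x : H →L[ℂ] H), L (t • x) = |t| * L x)
    -- ν is a state on A
    (ν : (H →L[ℂ] H) →L[ℂ] ℂ)
    -- the basic estimate coming from the finite diameter d of (Lip(A), L)
    (d : ℝ) (hd0 : 0 ≤ d)
    (hbound : ∀ x ∈ LipA, ‖x‖ ≤ (L x + ‖ν x‖) * (1 + d))
    -- (Lip(A), L) is a compact quantum metric space: its unit Lip/norm ball is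
    -- totally bounded (Rieffel's criterion)
    (hTB : TotallyBounded {x : H →L[ℂ] H | x ∈ LipA ∧ L x ≤ 1 ∧ ‖x‖ ≤ 1})
    (k : ℕ) (hk : 2 < k) :
    TotallyBounded {G : lp (fun _ : ℕ => H) 2 →L[ℂ] lp (fun _ : ℕ => H) 2 |
      ‖G‖ ≤ 1 ∧
      ∃ (t : ℝ) (m : ℕ → ℕ → (H →L[ℂ] H)),
        -- G - t·I has matrix (m_{ij})
        (∀ (i j : ℕ) (u v : H),
          ⟪lp.single 2 i u, (G - t • 1) (lp.single 2 j v)⟫_ℂ = ⟪u, m i j v⟫_ℂ) ∧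
        (∀ i j, m i j ∈ LipA) ∧
        (∀ i j, ContinuousLinearMap.adjoint (m i j) = m i j) ∧
        (∀ i j, m i j = m j i) ∧
        -- all weighted sups are finite (membership in Ã_ν)
        (∀ l : ℕ, ∃ M : ℝ, ∀ i j : ℕ,
          ((i + 1 : ℝ) + (j + 1 : ℝ)) ^ l * (L (m i j) + ‖ν (m i j)‖) ≤ M) ∧
        -- L_k(G) ≤ 1
        (∀ i j : ℕ,
          ((i + 1 : ℝ) + (j + 1 : ℝ)) ^ k * (L (m i j) + ‖ν (m i j)‖) ≤ 1)} := by
  rcases subsingleton_or_nontrivial (lp (fun _ : ℕ => H) 2) with _ | _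
  · exact Set.subsingleton_of_subsingleton.totallyBounded
  set w : ℕ → ℝ := fun n => ((n : ℝ) + 1) ^ (-(3 / 2) : ℝ)
  set c : ℕ × ℕ → ℝ := fun x => (1 + d) * (w x.1 * w x.2)
  have hc : Summable c :=
    (Real.summable_add_one_rpow_neg_mul_add_one_rpow_neg (by norm_num)).mul_left (1 + d)
  have hw : ∀ i j, w i * w j ≤ 1 := fun i j => mul_le_one₀
    (Real.rpow_le_one_of_one_le_of_nonpos (by simp) (by norm_num)) (by positivity)
    (Real.rpow_le_one_of_one_le_of_nonpos (by simp) (by norm_num))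
  set B := {x : H →L[ℂ] H | x ∈ LipA ∧ L x ≤ 1 ∧ ‖x‖ ≤ 1}
  have hB : TotallyBounded ((1 + d) • B) := by
    rw [← Set.image_smul]
    exact hTB.image (uniformContinuous_const_smul _)
  have hI := isCompact_Icc (a := -(1 + ∑' x, c x)) (b := 1 + ∑' x, c x)
  refine ((hI.image ContinuousLinearMap.continuous_real_smul_one).totallyBounded.add
    (lp.totallyBounded_setOf_matrix (p := 2) ENNReal.ofNat_ne_top hB hc)).subset ?_
  rintro G ⟨hG, t, m, hGm, hmLip, -, -, -, hLk⟩
  have hD : ∀ i j v, (G - t • 1) (lp.single 2 j v) i = m i j v := fun i j v =>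
    ext_inner_left ℂ fun u => by simpa only [lp.inner_single_left] using hGm i j u v
  have hmw : ∀ i j, L (m i j) + ‖ν (m i j)‖ ≤ w i * w j := fun i j =>
    le_rpow_neg_mul_rpow_neg_of_add_pow_mul_le_one (by simp) (by simp) hk (hLk i j)
  have hmc : ∀ i j, ‖m i j‖ ≤ c (i, j) := fun i j =>
    (hbound _ (hmLip i j)).trans <|
      (mul_comm _ _).trans_le (mul_le_mul_of_nonneg_left (hmw i j) (by linarith))
  have hmB : ∀ i j, m i j ∈ (1 + d) • B := fun i j =>
    mem_smul_setOf_le_one hLhom (by linarith) (hmLip i j)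
      (by linarith [norm_nonneg (ν (m i j)), hmw i j, hw i j])
      ((hmc i j).trans (by simpa using mul_le_mul_of_nonneg_left (hw i j) (by linarith)))
  have hGt := ContinuousLinearMap.opNorm_le_tsum_of_matrix ENNReal.ofNat_ne_top hD hc hmc
  have ht : |t| ≤ 1 + ∑' x, c x :=
    (ContinuousLinearMap.abs_le_norm_add_norm_sub_real_smul_one t G).trans (add_le_add hG hGt)
  exact ⟨t • 1, mem_image_of_mem _ (abs_le.1 ht), G - t • 1, ⟨m, hD, hmB, hmc⟩, add_sub_cancel _ _⟩

theorem ball_of_Ak_totallyBounded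
    {H : Type*} [NormedAddCommGroup H] [InnerProductSpace ℂ H] [CompleteSpace H]
    (LipA : Submodule ℝ (H →L[ℂ] H))
    (L : (H →L[ℂ] H) → ℝ) (hLnonneg : ∀ x, 0 ≤ L x)
    (hLhom : ∀ (t : ℝ) (x : H →L[ℂ] H), L (t • x) = |t| * L x)
    (hLtri : ∀ x y : H →L[ℂ] H, L (x + y) ≤ L x + L y)
    -- ν is a state on A
    (ν : (H →L[ℂ] H) →L[ℂ] ℂ) (hν1 : ν 1 = 1) (hνnorm : ∀ x, ‖ν x‖ ≤ ‖x‖)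
    (hνpos : ∀ x : H →L[ℂ] H, x.IsPositive → 0 ≤ (ν x).re ∧ (ν x).im = 0)
    -- the basic estimate coming from the finite diameter d of (Lip(A), L)
    (d : ℝ) (hd0 : 0 ≤ d)
    (hbound : ∀ x ∈ LipA, ‖x‖ ≤ (L x + ‖ν x‖) * (1 + d))
    -- (Lip(A), L) is a compact quantum metric space: its unit Lip/norm ball is
    -- totally bounded (Rieffel's criterion)
    (hTB : TotallyBounded {x : H →L[ℂ] H | x ∈ LipA ∧ L x ≤ 1 ∧ ‖x‖ ≤ 1})
    (k : ℕ) (hk : 2 < k) :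
    TotallyBounded {G : lp (fun _ : ℕ => H) 2 →L[ℂ] lp (fun _ : ℕ => H) 2 |
      ‖G‖ ≤ 1 ∧
      ∃ (t : ℝ) (m : ℕ → ℕ → (H →L[ℂ] H)),
        -- G - t·I has matrix (m_{ij})
        (∀ (i j : ℕ) (u v : H),
          ⟪lp.single 2 i u, (G - t • 1) (lp.single 2 j v)⟫_ℂ = ⟪u, m i j v⟫_ℂ) ∧
        (∀ i j, m i j ∈ LipA) ∧
        (∀ i j, ContinuousLinearMap.adjoint (m i j) = m i j) ∧
        (∀ i j, m i j = m j i) ∧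
        -- all weighted sups are finite (membership in Ã_ν)
        (∀ l : ℕ, ∃ M : ℝ, ∀ i j : ℕ,
          ((i + 1 : ℝ) + (j + 1 : ℝ)) ^ l * (L (m i j) + ‖ν (m i j)‖) ≤ M) ∧
        -- L_k(G) ≤ 1
        (∀ i j : ℕ,
          ((i + 1 : ℝ) + (j + 1 : ℝ)) ^ k * (L (m i j) + ‖ν (m i j)‖) ≤ 1)} :=
  ball_of_Ak_totallyBounded_general LipA L hLhom ν d hd0 hbound hTB k hk
end

section
/- In the setting of the main theorem, if a ∈ A₁ satisfies L₁(a) = 0, then a = λ·Id_{A₁} for some λ ∈ ℝ. -/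
open scoped ComplexOrder

/- STATEMENT 11 (Step (i)): If a ∈ A₁ = i(Ã_ν) ⊕ σ(A₂) satisfies
   L₁(a) = L₂(π(a)) + L_k(a − σ(π(a))) = 0, then a = λ·Id for some λ ∈ ℝ. -/
theorem L1_eq_zero_implies_scalar
    {A₁ A₂ : Type*}
    [CStarAlgebra A₁] [PartialOrder A₁] [StarOrderedRing A₁]
    [CStarAlgebra A₂] [PartialOrder A₂] [StarOrderedRing A₂]
    (π : A₁ →⋆ₐ[ℂ] A₂)
    -- positive unital splitting
    (σ : A₂ →L[ℂ] A₁) (hσ_split : ∀ c : A₂, π (σ c) = c)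
    (hσ_pos : ∀ c : A₂, 0 ≤ c → 0 ≤ σ c) (hσ_one : σ 1 = 1)
    -- W = i(Ã_ν), contained in ker π, on which L_k vanishes only at 0
    (W : Submodule ℝ A₁) (hW : ∀ x ∈ W, π x = 0)
    (Lk : A₁ → ℝ) (hLknonneg : ∀ x, 0 ≤ Lk x)
    (hLk0 : ∀ x ∈ W, (Lk x = 0 ↔ x = 0))
    -- V = A₂, on which L₂ vanishes exactly on ℝ·Id
    (V : Submodule ℝ A₂)
    (L₂ : A₂ → ℝ) (hL2nonneg : ∀ y, 0 ≤ L₂ y)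
    (hL20 : ∀ y ∈ V, (L₂ y = 0 ↔ ∃ t : ℝ, y = t • (1 : A₂)))
    -- a ∈ A₁ = i(Ã_ν) ⊕ σ(A₂) with L₁(a) = 0
    (a : A₁) (ha : ∃ x ∈ W, ∃ y ∈ V, a = x + σ y)
    (hL1a : L₂ (π a) + Lk (a - σ (π a)) = 0) :
    ∃ t : ℝ, a = t • (1 : A₁) := by
  obtain ⟨x, hxW, y, hyV, rfl⟩ := ha
  have hπa : π (x + σ y) = y := by
    simp [map_add, hW x hxW, hσ_split]
  have h2 := hL2nonneg (π (x + σ y))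
  have hk := hLknonneg ((x + σ y) - σ (π (x + σ y)))
  have hL2z : L₂ (π (x + σ y)) = 0 := by linarith
  have hLkz : Lk ((x + σ y) - σ (π (x + σ y))) = 0 := by linarith
  rw [hπa] at hL2z hLkz
  have hx0 : x = 0 := by
    have : (x + σ y) - σ y = x := by abel
    rw [this] at hLkz
    exact (hLk0 x hxW).mp hLkz
  obtain ⟨t, ht⟩ := (hL20 y hyV).mp hL2z
  refine ⟨t, ?_⟩
  rw [hx0, ht, zero_add]
  have : (t : ℂ) • (1 : A₂) = t • (1 : A₂) := by
    simp [Complex.coe_smul]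
  rw [← this, map_smul, hσ_one, Complex.coe_smul]
end

section
/- Let (X, L_X) and (Y, L_Y) be compact quantum metric spaces, Z an order unit space, and T : Z → X, S : Z → Y linear maps such that the map z ↦ (T z, S z) is a norm-homeomorphism onto its image and L(z) := L_X(T z) + L_Y(S z) vanishes exactly on ℝe. If a sequence (z_n) in { z : ‖z‖ ≤ 1, L(z) ≤ 1 } is such that both (T z_n) and (S z_n) admit norm-convergent subsequences, then (z_n) admits a norm-convergent subsequence; consequently the unit ball { z : ‖z‖ ≤ 1, L(z) ≤ 1 } is totally bounded. -/
/-!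
The map `z ↦ (T z, S z)` is uniformly inducing from `Z` into `X × Y`: it is linear, so uniform
continuity of its inverse on the image is the same as continuity at `0`, which is the `ε`–`δ`
hypothesis. It sends the unit Lip/norm ball of `Z` into the product of the Lip-balls of `X` and
`Y` of norm radii `‖T‖` and `‖S‖`, which are rescalings of the unit ones and hence totally
bounded. Total boundedness pulls back along uniformly inducing maps, and in the complete space `Z`
a totally bounded set has compact closure, which gives the convergent subsequences.
-/

open Filter
open scoped Pointwise

theorem TotallyBounded.prod {α β : Type*} [UniformSpace α] [UniformSpace β] {s : Set α}
    {t : Set β} (hs : TotallyBounded s) (ht : TotallyBounded t) : TotallyBounded (s ×ˢ t) := by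
  rw [totallyBounded_iff_ultrafilter] at hs ht ⊢
  intro u hu
  have hfst : Cauchy (u.map Prod.fst : Filter α) :=
    hs _ (map_mono hu |>.trans <| by simpa using Set.fst_image_prod_subset s t)
  have hsnd : Cauchy (u.map Prod.snd : Filter β) :=
    ht _ (map_mono hu |>.trans <| by simpa using Set.snd_image_prod_subset s t)
  exact (hfst.prod hsnd).mono le_prod_map_fst_snd

theorem ContinuousLinearMap.isUniformInducing_of_forall_norm_le {𝕜 E F : Type*}
    [NormedField 𝕜] [SeminormedAddCommGroup E] [NormedSpace 𝕜 E] [SeminormedAddCommGroup F]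
    [NormedSpace 𝕜 F] (f : E →L[𝕜] F) (h : ∀ ε > 0, ∃ δ > 0, ∀ z, ‖f z‖ ≤ δ → ‖z‖ ≤ ε) :
    IsUniformInducing f := by
  refine Metric.isUniformInducing_iff.2 ⟨f.uniformContinuous, fun ε hε => ?_⟩
  obtain ⟨δ, hδ, hfδ⟩ := h (ε / 2) (half_pos hε)
  refine ⟨δ, hδ, fun {a b} hab => ?_⟩
  rw [dist_eq_norm, ← map_sub] at hab
  rw [dist_eq_norm]
  exact (hfδ _ hab.le).trans_lt (half_lt_self hε)

section LipNormBall

variable {E : Type*} [NormedAddCommGroup E] [NormedSpace ℝ E]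

def lipNormBall (L : E → ℝ) (r : ℝ) : Set E := {x | L x ≤ 1 ∧ ‖x‖ ≤ r}

theorem lipNormBall_subset_smul_lipNormBall_one {L : E → ℝ}
    (hL : ∀ (t : ℝ) (x : E), L (t • x) = |t| * L x) (r : ℝ) :
    lipNormBall L r ⊆ max 1 r • lipNormBall L 1 := by
  set c := max 1 r
  have hc : 1 ≤ c := le_max_left 1 r
  have hc₀ : 0 < c := one_pos.trans_le hc
  rintro x ⟨hLx, hx⟩
  rw [Set.mem_smul_set_iff_inv_smul_mem₀ hc₀.ne']
  refine ⟨?_, ?_⟩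
  · rw [hL, abs_of_pos (inv_pos.2 hc₀)]
    calc c⁻¹ * L x ≤ c⁻¹ * 1 := mul_le_mul_of_nonneg_left hLx (inv_nonneg.2 hc₀.le)
      _ = c⁻¹ := mul_one _
      _ ≤ 1 := inv_le_one_of_one_le₀ hc
  · rw [norm_smul, Real.norm_of_nonneg (inv_nonneg.2 hc₀.le), inv_mul_le_iff₀ hc₀, mul_one]
    exact hx.trans (le_max_right 1 r)

theorem totallyBounded_lipNormBall {L : E → ℝ} (hL : ∀ (t : ℝ) (x : E), L (t • x) = |t| * L x)
    (h : TotallyBounded (lipNormBall L 1)) (r : ℝ) : TotallyBounded (lipNormBall L r) :=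
  (h.image (uniformContinuous_const_smul (max 1 r))).subset
    (by rw [Set.image_smul]; exact lipNormBall_subset_smul_lipNormBall_one hL r)

end LipNormBall

theorem totallyBounded_of_direct_sum_decomposition_general
    {X Y Z : Type*}
    [NormedAddCommGroup X] [NormedSpace ℝ X]
    [NormedAddCommGroup Y] [NormedSpace ℝ Y]
    [NormedAddCommGroup Z] [NormedSpace ℝ Z] [CompleteSpace Z]
    -- Lip norms of the CQMS X and Y
    (LX : X → ℝ) (hLXnonneg : ∀ x, 0 ≤ LX x)
    (hLXhom : ∀ (t : ℝ) (x : X), LX (t • x) = |t| * LX x)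
    (LY : Y → ℝ) (hLYnonneg : ∀ y, 0 ≤ LY y)
    (hLYhom : ∀ (t : ℝ) (y : Y), LY (t • y) = |t| * LY y)
    -- X and Y are compact quantum metric spaces (Rieffel's criterion)
    (hTBX : TotallyBounded {x : X | LX x ≤ 1 ∧ ‖x‖ ≤ 1})
    (hTBY : TotallyBounded {y : Y | LY y ≤ 1 ∧ ‖y‖ ≤ 1})
    -- the linear maps T and S
    (T : Z →L[ℝ] X) (S : Z →L[ℝ] Y)
    -- z ↦ (Tz, Sz) is a norm-homeomorphism onto its image
    (hinj : ∀ ε > 0, ∃ δ > 0, ∀ z : Z, ‖T z‖ + ‖S z‖ ≤ δ → ‖z‖ ≤ ε) :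
    -- subsequence extraction
    (∀ z : ℕ → Z,
      (∀ n, ‖z n‖ ≤ 1 ∧ LX (T (z n)) + LY (S (z n)) ≤ 1) →
      (∃ φ : ℕ → ℕ, StrictMono φ ∧ ∃ x : X, Tendsto (fun n => T (z (φ n))) atTop (nhds x)) →
      (∃ ψ : ℕ → ℕ, StrictMono ψ ∧ ∃ y : Y, Tendsto (fun n => S (z (ψ n))) atTop (nhds y)) →
      ∃ θ : ℕ → ℕ, StrictMono θ ∧ ∃ l : Z, Tendsto (fun n => z (θ n)) atTop (nhds l)) ∧
    -- consequently the unit Lip/norm ball is totally bounded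
    TotallyBounded {z : Z | ‖z‖ ≤ 1 ∧ LX (T z) + LY (S z) ≤ 1} := by
  have hB : TotallyBounded {z : Z | ‖z‖ ≤ 1 ∧ LX (T z) + LY (S z) ≤ 1} := by
    have hembed : IsUniformInducing (T.prod S) := by
      refine (T.prod S).isUniformInducing_of_forall_norm_le fun ε hε => ?_
      obtain ⟨δ, hδ, hTS⟩ := hinj ε hε
      refine ⟨δ / 2, half_pos hδ, fun z hz => hTS z ?_⟩
      rw [ContinuousLinearMap.prod_apply, Prod.norm_def, max_le_iff] at hz
      linarith [hz.1, hz.2]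
    refine (totallyBounded_preimage hembed <|
      (totallyBounded_lipNormBall hLXhom hTBX ‖T‖).prod
        (totallyBounded_lipNormBall hLYhom hTBY ‖S‖)).subset ?_
    rintro z ⟨hz, hLz⟩
    simp only [Set.mem_preimage, ContinuousLinearMap.prod_apply, Set.mem_prod]
    refine ⟨⟨by linarith [hLYnonneg (S z)], ?_⟩, by linarith [hLXnonneg (T z)], ?_⟩
    · simpa using T.le_opNorm_of_le hz
    · simpa using S.le_opNorm_of_le hz
  refine ⟨fun z hz _ _ => ?_, hB⟩
  obtain ⟨l, -, θ, hθ, hl⟩ :=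
    (hB.closure.isCompact_of_isClosed isClosed_closure).tendsto_subseq
      fun n => subset_closure (hz n)
  exact ⟨θ, hθ, l, hl⟩

theorem totallyBounded_of_direct_sum_decomposition
    {X Y Z : Type*}
    [NormedAddCommGroup X] [NormedSpace ℝ X]
    [NormedAddCommGroup Y] [NormedSpace ℝ Y]
    [NormedAddCommGroup Z] [NormedSpace ℝ Z] [CompleteSpace Z]
    [PartialOrder Z]
    -- Z is an order unit space with order unit e
    (e : Z)
    (horder : ∀ z : Z, ∃ r : ℝ, z ≤ r • e)
    (harch : ∀ z : Z, (∀ r : ℝ, 0 ≤ r → z ≤ r • e) → z ≤ 0)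
    -- Lip norms of the CQMS X and Y
    (LX : X → ℝ) (hLXnonneg : ∀ x, 0 ≤ LX x)
    (hLXhom : ∀ (t : ℝ) (x : X), LX (t • x) = |t| * LX x)
    (hLXtri : ∀ x x' : X, LX (x + x') ≤ LX x + LX x')
    (LY : Y → ℝ) (hLYnonneg : ∀ y, 0 ≤ LY y)
    (hLYhom : ∀ (t : ℝ) (y : Y), LY (t • y) = |t| * LY y)
    (hLYtri : ∀ y y' : Y, LY (y + y') ≤ LY y + LY y')
    -- X and Y are compact quantum metric spaces (Rieffel's criterion)
    (hTBX : TotallyBounded {x : X | LX x ≤ 1 ∧ ‖x‖ ≤ 1})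
    (hTBY : TotallyBounded {y : Y | LY y ≤ 1 ∧ ‖y‖ ≤ 1})
    -- the linear maps T and S
    (T : Z →L[ℝ] X) (S : Z →L[ℝ] Y)
    -- z ↦ (Tz, Sz) is a norm-homeomorphism onto its image
    (hinj : ∀ ε > 0, ∃ δ > 0, ∀ z : Z, ‖T z‖ + ‖S z‖ ≤ δ → ‖z‖ ≤ ε)
    -- L vanishes exactly on ℝe
    (hL0 : ∀ z : Z, (LX (T z) + LY (S z) = 0 ↔ ∃ t : ℝ, z = t • e)) :
    -- subsequence extraction
    (∀ z : ℕ → Z,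
      (∀ n, ‖z n‖ ≤ 1 ∧ LX (T (z n)) + LY (S (z n)) ≤ 1) →
      (∃ φ : ℕ → ℕ, StrictMono φ ∧ ∃ x : X, Tendsto (fun n => T (z (φ n))) atTop (nhds x)) →
      (∃ ψ : ℕ → ℕ, StrictMono ψ ∧ ∃ y : Y, Tendsto (fun n => S (z (ψ n))) atTop (nhds y)) →
      ∃ θ : ℕ → ℕ, StrictMono θ ∧ ∃ l : Z, Tendsto (fun n => z (θ n)) atTop (nhds l)) ∧
    -- consequently the unit Lip/norm ball is totally bounded
    TotallyBounded {z : Z | ‖z‖ ≤ 1 ∧ LX (T z) + LY (S z) ≤ 1} :=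
  totallyBounded_of_direct_sum_decomposition_general LX hLXnonneg hLXhom LY hLYnonneg hLYhom hTBX
    hTBY T S hinj
end
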